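/- arXiv:1705.05365 — 5 statements merged into one kernel-verified Lean document; each statement's English description precedes it below -/
import Mathlib

section
/- Let σ be a permutation of {1,…,n} with σ(C) = C for a binary linear code C, and define the unitary V on (ℂ²)^⊗n as the product of CZ gates applied between qubits i and σ(i) for all i with σ(i) ≠ i. Then for every S with x-string in C, V (X_S) V† = ± X_S · Z_{σ(S)} Z_{σ⁻¹(S)}, where Z_{σ(S)} Z_{σ⁻¹(S)} is a product of Z operators on the symmetric-difference-with-multiplicity σ(S) Δ σ⁻¹(S). -/
open Finset Matrix

noncomputable section

/-- The X-type Pauli operator `X_S = ∏_{i∈S} X_i` on n qubits, as a matrix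
indexed by computational basis states `Fin n → ZMod 2`. -/
def XS (n : ℕ) (S : Finset (Fin n)) :
    Matrix (Fin n → ZMod 2) (Fin n → ZMod 2) ℂ :=
  fun v w => if w = v + (fun i => if i ∈ S then 1 else 0) then 1 else 0

/-- The Z-type Pauli operator `Z_T = ∏_{i∈T} Z_i` (diagonal). -/
def ZT (n : ℕ) (T : Finset (Fin n)) :
    Matrix (Fin n → ZMod 2) (Fin n → ZMod 2) ℂ :=
  fun v w => if v = w then (-1 : ℂ) ^ (∑ i ∈ T, (v i).val) else 0

/-- The product of CZ gates applied between qubits `i` and `σ(i)`, for all `i`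
with `σ(i) ≠ i` (the CZ gates are mutually commuting diagonal gates, so this
diagonal matrix is their product in any order). -/
def Vgate (n : ℕ) (σ : Equiv.Perm (Fin n)) :
    Matrix (Fin n → ZMod 2) (Fin n → ZMod 2) ℂ :=
  fun v w => if v = w then
    (-1 : ℂ) ^ (∑ i ∈ Finset.univ.filter (fun i => σ i ≠ i), (v i).val * (v (σ i)).val)
  else 0

/-!
`V` is diagonal with entry `(-1)^{q(v)}`, `q(v) = ∑_{σ i ≠ i} v_i v_{σ i}`, and `X_S` shifts `v` by the
indicator `e` of `S`, so `V X_S V†` has entry `(-1)^{q(v) + q(v + e)}` at `(v, v + e)`. Over `𝔽₂`,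
`q(v + e) = q(v) + q(e) + B(v, e) + B(e, v)` with `B(v, w) = ∑_i v_i w_{σ i}` (fixed points of `σ`
contribute `2 v_i e_i = 0` to the cross terms). Since `B(e, w) = ∑_{σ(S)} w` and `B(w, e) = ∑_{σ⁻¹(S)} w`,
and `B(e, ·) + B(·, e)` takes the same value at `v` and at `v + e`, this is `q(e)` plus the exponent of
`Z_{σ(S)} Z_{σ⁻¹(S)}` at the column `v + e`; the global sign is `ε = (-1)^{q(e)}`.
-/

def signZMod2 (a : ZMod 2) : ℂ := (-1) ^ a.val

lemma signZMod2_add (a b : ZMod 2) : signZMod2 (a + b) = signZMod2 a * signZMod2 b := by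
  rw [signZMod2, ZMod.val_add, ← neg_one_pow_eq_pow_mod_two, pow_add]
  rfl

lemma signZMod2_eq_one_or_neg_one (a : ZMod 2) : signZMod2 a = 1 ∨ signZMod2 a = -1 :=
  neg_one_pow_eq_or ℂ _

lemma star_signZMod2 (a : ZMod 2) : star (signZMod2 a) = signZMod2 a := by
  simp [signZMod2]

lemma neg_one_pow_sum_eq_signZMod2 {ι : Type*} (s : Finset ι) (f : ι → ℕ) :
    (-1 : ℂ) ^ (∑ i ∈ s, f i) = signZMod2 (∑ i ∈ s, (f i : ZMod 2)) := by
  rw [signZMod2, ← Nat.cast_sum, ZMod.val_natCast, ← neg_one_pow_eq_pow_mod_two]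

section PermPairing

variable {ι R : Type*} [Fintype ι] [CommRing R] (σ : Equiv.Perm ι)

def permPairing (v w : ι → R) : R := ∑ i, v i * w (σ i)

def czPhase [DecidableEq ι] (v : ι → R) : R :=
  ∑ i ∈ univ.filter (fun i => σ i ≠ i), v i * v (σ i)

lemma permPairing_add_left (u v w : ι → R) :
    permPairing σ (u + v) w = permPairing σ u w + permPairing σ v w := by
  simp only [permPairing, Pi.add_apply, add_mul, sum_add_distrib]

lemma permPairing_add_right (u v w : ι → R) :
    permPairing σ u (v + w) = permPairing σ u v + permPairing σ u w := by
  simp only [permPairing, Pi.add_apply, mul_add, sum_add_distrib]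

lemma sum_image_perm_eq_permPairing [DecidableEq ι] (S : Finset ι) (w : ι → R) :
    ∑ j ∈ S.image σ, w j = permPairing σ (fun i => if i ∈ S then 1 else 0) w := by
  simp [permPairing, sum_image σ.injective.injOn, ite_mul]

lemma sum_image_perm_inv_eq_permPairing [DecidableEq ι] (S : Finset ι) (w : ι → R) :
    ∑ j ∈ S.image ⇑σ⁻¹, w j = permPairing σ w (fun i => if i ∈ S then 1 else 0) := by
  rw [permPairing, ← Equiv.sum_comp σ⁻¹]
  simp [mul_ite]

variable [DecidableEq ι] [CharP R 2]

lemma czPhase_add (v w : ι → R) :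
    czPhase σ (v + w) = czPhase σ v + czPhase σ w + (permPairing σ v w + permPairing σ w v) := by
  have cross : ∑ i ∈ univ.filter (fun i => σ i ≠ i), (v i * w (σ i) + w i * v (σ i))
      = permPairing σ v w + permPairing σ w v := by
    rw [permPairing, permPairing, ← sum_add_distrib]
    refine sum_filter_of_ne fun i _ hne hfix => hne ?_
    rw [hfix, mul_comm (w i), CharTwo.add_self_eq_zero]
  rw [czPhase, czPhase, czPhase, ← cross, ← sum_add_distrib, ← sum_add_distrib]
  refine sum_congr rfl fun i _ => ?_
  simp only [Pi.add_apply]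
  ring

lemma czPhase_add_czPhase_add (v e : ι → R) :
    czPhase σ v + czPhase σ (v + e)
      = czPhase σ e + (permPairing σ e (v + e) + permPairing σ (v + e) e) := by
  rw [czPhase_add, permPairing_add_left, permPairing_add_right]
  linear_combination CharTwo.add_self_eq_zero (czPhase σ v) -
    CharTwo.add_self_eq_zero (permPairing σ e e)

end PermPairing

lemma Vgate_eq_diagonal (n : ℕ) (σ : Equiv.Perm (Fin n)) :
    Vgate n σ = diagonal fun v => signZMod2 (czPhase σ v) := by
  ext v w
  simp [Vgate, czPhase, diagonal_apply, neg_one_pow_sum_eq_signZMod2]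

lemma ZT_eq_diagonal (n : ℕ) (T : Finset (Fin n)) :
    ZT n T = diagonal fun v => signZMod2 (∑ i ∈ T, v i) := by
  ext v w
  simp [ZT, diagonal_apply, neg_one_pow_sum_eq_signZMod2]

theorem stmt_8_general (n : ℕ) (σ : Equiv.Perm (Fin n))
    (S : Finset (Fin n)) :
    ∃ ε : ℂ, (ε = 1 ∨ ε = -1) ∧
      Vgate n σ * XS n S * (Vgate n σ)ᴴ
        = ε • (XS n S * ZT n (S.image ⇑σ) * ZT n (S.image ⇑σ⁻¹)) := by
  refine ⟨signZMod2 (czPhase σ fun i => if i ∈ S then 1 else 0), signZMod2_eq_one_or_neg_one _, ?_⟩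
  rw [Vgate_eq_diagonal, ZT_eq_diagonal, ZT_eq_diagonal, diagonal_conjTranspose]
  ext v w
  simp only [Matrix.smul_apply, mul_diagonal, diagonal_mul, Pi.star_apply, star_signZMod2, XS]
  split_ifs with hw
  · subst hw
    rw [sum_image_perm_inv_eq_permPairing, sum_image_perm_eq_permPairing]
    simp only [one_mul, mul_one, smul_eq_mul, ← signZMod2_add, czPhase_add_czPhase_add]
  · simp

/-- If `σ` is a permutation with `σ(C) = C` for a binary linear code `C`, and
`V` is the product of CZ gates from `i` to `σ(i)`, then for every `S` whose
indicator vector lies in `C`, conjugating `X_S` by `V` gives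
`± X_S · Z_{σ(S)} Z_{σ⁻¹(S)}`. -/
theorem stmt_8 (n : ℕ) (C : Submodule (ZMod 2) (Fin n → ZMod 2)) (σ : Equiv.Perm (Fin n))
    (hσ : ∀ x, x ∈ C ↔ (x ∘ ⇑σ⁻¹) ∈ C)
    (S : Finset (Fin n)) (hS : (fun i => if i ∈ S then (1 : ZMod 2) else 0) ∈ C) :
    ∃ ε : ℂ, (ε = 1 ∨ ε = -1) ∧
      Vgate n σ * XS n S * (Vgate n σ)ᴴ
        = ε • (XS n S * ZT n (S.image ⇑σ) * ZT n (S.image ⇑σ⁻¹)) :=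
  stmt_8_general n σ S
end
end

section
/- The seven weight-5 vectors in 𝔽₂¹⁵ with supports {1,2,4,8,15}, {1,2,5,10,12}, {1,2,6,11,14}, {1,2,7,9,13}, {1,4,6,9,10}, {1,4,7,12,14}, {1,8,10,13,14} all lie in the Hamming code C = ker H, are linearly independent modulo C⊥, and together with C⊥ span C. -/
/-- The 4×15 parity-check matrix over 𝔽₂ whose j-th column is the binary
representation of j (columns indexed 1,…,15). -/
def Hmat : Matrix (Fin 4) (Fin 15) (ZMod 2) :=
  fun r i => if Nat.testBit ((i : ℕ) + 1) (3 - (r : ℕ)) then 1 else 0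

/-- The classical [15,11,3] Hamming code `C = ker H`. -/
def HammingCode : Submodule (ZMod 2) (Fin 15 → ZMod 2) :=
  LinearMap.ker Hmat.mulVecLin

/-- The dual code `C⊥` (row space of H). -/
def DualCode : Submodule (ZMod 2) (Fin 15 → ZMod 2) :=
  Submodule.span (ZMod 2) (Set.range fun r => Hmat r)

/-- The (1-indexed) supports of the seven weight-5 logical-operator vectors. -/
def supp : Fin 7 → List ℕ :=
  ![[1,2,4,8,15], [1,2,5,10,12], [1,2,6,11,14], [1,2,7,9,13],
    [1,4,6,9,10], [1,4,7,12,14], [1,8,10,13,14]]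

/-- The seven logical-operator vectors in 𝔽₂¹⁵. -/
def lov (j : Fin 7) : Fin 15 → ZMod 2 :=
  fun i => if ((i : ℕ) + 1) ∈ supp j then 1 else 0

/-!
Every vector of `C = ker H` is orthogonal to the rows of `H`, hence to all of `C⊥`. So seven
vectors of `C` forming a dual basis to the `lov j` under the dot product show that the `lov j`
are independent modulo `C⊥`. Since columns `8, 4, 2, 1` of `H` form the identity matrix,
`rank H = 4`, so `dim C⊥ = 4` and `dim C = 11`; then `C⊥ ⊔ span lov ≤ C` has dimension
`4 + 7 = dim C` and is all of `C`.
-/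

open Matrix Module Submodule

section LinearAlgebra

variable {K n ι : Type*} [Field K] [Fintype n] [Fintype ι]

theorem dotProduct_eq_zero_of_mem_span_row {m : Type*} (H : Matrix m n K) {w : n → K}
    (hw : H *ᵥ w = 0) {x : n → K} (hx : x ∈ span K (Set.range H.row)) : x ⬝ᵥ w = 0 := by
  induction hx using Submodule.span_induction with
  | mem _ hy =>
    obtain ⟨r, rfl⟩ := hy
    exact congrFun hw r
  | zero => exact zero_dotProduct w
  | add _ _ _ _ hy hz => rw [add_dotProduct, hy, hz, add_zero]
  | smul c _ _ hy => rw [smul_dotProduct, hy, smul_zero]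

theorem eq_zero_of_sum_smul_mem_of_dotProduct_eq [DecidableEq ι] {S : Submodule K (n → K)}
    {v w : ι → n → K} (hS : ∀ k, ∀ x ∈ S, x ⬝ᵥ w k = 0)
    (hvw : ∀ j k, v j ⬝ᵥ w k = if j = k then 1 else 0) {a : ι → K}
    (ha : ∑ j, a j • v j ∈ S) : a = 0 := by
  funext k
  simpa [sum_dotProduct, smul_dotProduct, hvw] using hS k _ ha

theorem finrank_sup_span_range {V : Type*} [AddCommGroup V] [Module K V] [FiniteDimensional K V]
    (S : Submodule K V) (v : ι → V) (hv : ∀ a : ι → K, ∑ j, a j • v j ∈ S → a = 0) :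
    finrank K ↥(S ⊔ span K (Set.range v)) = finrank K S + Fintype.card ι := by
  have hind : LinearIndependent K v := Fintype.linearIndependent_iff.2 fun a ha =>
    congrFun (hv a (ha ▸ S.zero_mem))
  have hdisj : S ⊓ span K (Set.range v) = ⊥ := by
    refine (Submodule.eq_bot_iff _).2 fun x ⟨hxS, hxv⟩ => ?_
    obtain ⟨a, rfl⟩ := (mem_span_range_iff_exists_fun K).1 hxv
    simp [hv a hxS]
  have := Submodule.finrank_sup_add_finrank_inf_eq S (span K (Set.range v))
  rwa [hdisj, finrank_bot, add_zero, finrank_span_eq_card hind] at this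

theorem rank_eq_card_of_submatrix_eq_one {m : Type*} [Fintype m] [DecidableEq m]
    (H : Matrix m n K) (c : m → n) (hc : H.submatrix id c = 1) : H.rank = Fintype.card m :=
  le_antisymm H.rank_le_card_height (by simpa [hc] using H.rank_submatrix_le id c)

theorem rank_add_finrank_ker_mulVecLin {m : Type*} (H : Matrix m n K) :
    H.rank + finrank K (LinearMap.ker H.mulVecLin) = Fintype.card n := by
  rw [Matrix.rank, LinearMap.finrank_range_add_finrank_ker, finrank_fintype_fun_eq_card]

end LinearAlgebra

/-- Supports of seven vectors of `C` dual to `lov` under the dot product, found by solving a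
linear system over 𝔽₂. -/
def dualSupp : Fin 7 → List ℕ :=
  ![[7,8,9,10,12], [1,2,5,10,12], [2,3,4,9,12], [1,3,6,8,12],
    [1,4,6,9,10], [3,4,5,8,10], [2,5,6,8,9]]

def dualLov (k : Fin 7) : Fin 15 → ZMod 2 :=
  fun i => if ((i : ℕ) + 1) ∈ dualSupp k then 1 else 0

theorem Hmat_mulVec_lov : ∀ j, Hmat *ᵥ lov j = 0 := by decide

theorem Hmat_mulVec_row : ∀ r, Hmat *ᵥ Hmat.row r = 0 := by decide

theorem Hmat_mulVec_dualLov : ∀ k, Hmat *ᵥ dualLov k = 0 := by decide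

theorem lov_dotProduct_dualLov : ∀ j k, lov j ⬝ᵥ dualLov k = if j = k then 1 else 0 := by
  decide

/-- The columns of `H` with 1-based labels `8, 4, 2, 1` form the identity matrix. -/
theorem Hmat_submatrix_eq_one : Hmat.submatrix id ![7, 3, 1, 0] = 1 := by decide

theorem rank_Hmat : Hmat.rank = 4 :=
  rank_eq_card_of_submatrix_eq_one Hmat _ Hmat_submatrix_eq_one

theorem finrank_HammingCode : finrank (ZMod 2) HammingCode = 11 := by
  have := rank_add_finrank_ker_mulVecLin Hmat
  rw [rank_Hmat, Fintype.card_fin] at this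
  unfold HammingCode
  omega

theorem finrank_DualCode : finrank (ZMod 2) DualCode = 4 :=
  (Hmat.rank_eq_finrank_span_row).symm.trans rank_Hmat

theorem DualCode_le_HammingCode : DualCode ≤ HammingCode :=
  span_le.2 fun _ ⟨r, hr⟩ => hr ▸ Hmat_mulVec_row r

/-- The seven weight-5 vectors all lie in the Hamming code, are linearly
independent modulo `C⊥`, and together with `C⊥` span `C`. -/
theorem stmt_11 :
    (∀ j, lov j ∈ HammingCode) ∧
    (∀ a : Fin 7 → ZMod 2, (∑ j, a j • lov j) ∈ DualCode → a = 0) ∧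
    DualCode ⊔ Submodule.span (ZMod 2) (Set.range lov) = HammingCode := by
  have hind : ∀ a : Fin 7 → ZMod 2, (∑ j, a j • lov j) ∈ DualCode → a = 0 := fun _ =>
    eq_zero_of_sum_smul_mem_of_dotProduct_eq
      (fun k _ hx => dotProduct_eq_zero_of_mem_span_row Hmat (Hmat_mulVec_dualLov k) hx)
      lov_dotProduct_dualLov
  refine ⟨Hmat_mulVec_lov, hind, eq_of_le_of_finrank_eq ?_ ?_⟩
  · exact sup_le DualCode_le_HammingCode (span_le.2 fun _ ⟨j, hj⟩ => hj ▸ Hmat_mulVec_lov j)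
  · rw [finrank_sup_span_range DualCode lov hind, finrank_DualCode, finrank_HammingCode,
      Fintype.card_fin]
end

section
/- The permutations σ₁ = (1,2,3)(4,14,10)(5,12,9)(6,13,11)(7,15,8), σ₂ = (1,10,5,2,12)(3,6,4,8,9)(7,14,13,11,15), and σ₃ = (1,10,15,3,8,13)(4,6)(5,12,11)(7,14,9) of {1,…,15} each map the Hamming code C = ker H to itself. -/
def σ₁ : Equiv.Perm (Fin 15) :=
  ([0, 1, 2] : List (Fin 15)).formPerm * ([3, 13, 9] : List (Fin 15)).formPerm *
  ([4, 11, 8] : List (Fin 15)).formPerm * ([5, 12, 10] : List (Fin 15)).formPerm *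
  ([6, 14, 7] : List (Fin 15)).formPerm

def σ₂ : Equiv.Perm (Fin 15) :=
  ([0, 9, 4, 1, 11] : List (Fin 15)).formPerm * ([2, 5, 3, 7, 8] : List (Fin 15)).formPerm *
  ([6, 13, 12, 10, 14] : List (Fin 15)).formPerm

def σ₃ : Equiv.Perm (Fin 15) :=
  ([0, 9, 14, 2, 7, 12] : List (Fin 15)).formPerm * ([3, 5] : List (Fin 15)).formPerm *
  ([4, 11, 10] : List (Fin 15)).formPerm * ([6, 13, 8] : List (Fin 15)).formPerm

def permVec (σ : Equiv.Perm (Fin 15)) (x : Fin 15 → ZMod 2) : Fin 15 → ZMod 2 :=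
  x ∘ ⇑σ⁻¹

def Amat (σ : Equiv.Perm (Fin 15)) : Matrix (Fin 4) (Fin 4) (ZMod 2) :=
  (Hmat.submatrix id ⇑σ).submatrix id ![7, 3, 1, 0]

lemma mem_of (σ : Equiv.Perm (Fin 15))
    (h : Hmat.submatrix id ⇑σ = Amat σ * Hmat) :
    ∀ x ∈ HammingCode, permVec σ x ∈ HammingCode := by
  intro x hx
  have hx0 : Hmat.mulVec x = 0 := hx
  have key : Hmat.mulVec (permVec σ x) = (Hmat.submatrix id ⇑σ).mulVec x := by
    funext r
    simp only [Matrix.mulVec, dotProduct, Matrix.submatrix_apply, id_eq, permVec,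
      Function.comp_apply]
    rw [← Equiv.sum_comp σ⁻¹ (fun j => Hmat r (σ j) * x j)]
    simp
  show Hmat.mulVec (permVec σ x) = 0
  rw [key, h, ← Matrix.mulVec_mulVec, hx0, Matrix.mulVec_zero]

lemma image_eq (σ : Equiv.Perm (Fin 15))
    (h : Hmat.submatrix id ⇑σ = Amat σ * Hmat)
    (h' : Hmat.submatrix id ⇑σ⁻¹ = Amat σ⁻¹ * Hmat) :
    (permVec σ) '' (HammingCode : Set (Fin 15 → ZMod 2)) = HammingCode := by
  apply Set.Subset.antisymm
  · rintro _ ⟨x, hx, rfl⟩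
    exact mem_of σ h x hx
  · intro x hx
    refine ⟨permVec σ⁻¹ x, mem_of σ⁻¹ h' x hx, ?_⟩
    funext i
    simp [permVec]

/-- Each of σ₁, σ₂, σ₃ maps the Hamming code to itself. -/
theorem stmt_13 :
    (permVec σ₁) '' (HammingCode : Set (Fin 15 → ZMod 2)) = HammingCode ∧
    (permVec σ₂) '' (HammingCode : Set (Fin 15 → ZMod 2)) = HammingCode ∧
    (permVec σ₃) '' (HammingCode : Set (Fin 15 → ZMod 2)) = HammingCode := by
  exact ⟨image_eq σ₁ (by decide) (by decide),
         image_eq σ₂ (by decide) (by decide),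
         image_eq σ₃ (by decide) (by decide)⟩
end

section
/- For the [[n, n−2, 2]] code (n even) with X̄_j = X₁X_{j+1}, Z̄_j = Z_{j+1}Z_n, the physical circuit Z_n · CZ_{2,3} · CZ_{2,n} · CZ_{3,n} preserves the code space and implements the logical gate CZ between encoded qubits 1 and 2: it fixes all Z̄_j, maps X̄₁ ↦ X̄₁Z̄₂ and X̄₂ ↦ X̄₂Z̄₁ up to stabilizers, and fixes X̄_j for j ≥ 3 up to stabilizers. -/
set_option maxHeartbeats 2000000



/- We work in the 𝔽₂ (symplectic) representation of n-qubit Pauli operators: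
a Pauli is a pair (a, b) of its X-part and Z-part vectors, and equalities of
Pauli operators "up to stabilizers and signs" become equalities of pairs
modulo the span of the stabilizer pairs.  Qubits are 0-indexed, so the paper's
qubits 2, 3, n are indices 1, 2, n−1.  The diagonal gate Z_n acts trivially
on Pauli conjugation (contributing only signs). -/

/-- X-part vector of the logical operator X̄_j = X₁X_{j+1}, as the pair
(a, 0) (logical qubits 0-indexed). -/
def xpair (n : ℕ) (j : Fin (n - 2)) : (Fin n → ZMod 2) × (Fin n → ZMod 2) :=
  (fun i => (if (i : ℕ) = 0 then 1 else 0) + (if (i : ℕ) = (j : ℕ) + 1 then 1 else 0), 0)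

/-- The pair (0, b) of the logical operator Z̄_j = Z_{j+1}Z_n. -/
def zpair (n : ℕ) (j : Fin (n - 2)) : (Fin n → ZMod 2) × (Fin n → ZMod 2) :=
  (0, fun i => (if (i : ℕ) = (j : ℕ) + 1 then 1 else 0) + (if (i : ℕ) = n - 1 then 1 else 0))

/-- Conjugation action of the gate CZ_{p,q} on a Pauli (a, b): the X-part is
unchanged and the Z-part gains a_p·e_q + a_q·e_p. -/
def czConj (n : ℕ) (p q : Fin n) (e : (Fin n → ZMod 2) × (Fin n → ZMod 2)) :
    (Fin n → ZMod 2) × (Fin n → ZMod 2) :=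
  (e.1, e.2 + fun i => (if i = q then e.1 p else 0) + (if i = p then e.1 q else 0))

/-- The span of the stabilizer pairs: X^⊗n is (1⃗, 0) and Z^⊗n is (0, 1⃗). -/
def stabPairs (n : ℕ) : Submodule (ZMod 2) ((Fin n → ZMod 2) × (Fin n → ZMod 2)) :=
  Submodule.span (ZMod 2) {((fun _ => 1), 0), (0, (fun _ => 1))}

theorem mem_of_eq_zero {M : Type*} [AddCommGroup M] [Module (ZMod 2) M]
    (S : Submodule (ZMod 2) M) {x : M} (h : x = 0) : x ∈ S := h ▸ S.zero_mem

/-- For the [[n, n−2, 2]] code (n even), the circuit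
Z_n · CZ_{2,3} · CZ_{2,n} · CZ_{3,n} preserves the code space (conjugates the
stabilizers X^⊗n, Z^⊗n to stabilizers), fixes all Z̄_j, maps X̄₁ ↦ X̄₁Z̄₂ and
X̄₂ ↦ X̄₂Z̄₁, and fixes X̄_j for j ≥ 3, all up to stabilizers (and signs):
it implements the logical gate CZ between encoded qubits 1 and 2. -/
theorem stmt_18 (n : ℕ) (hn : 4 ≤ n) (hne : Even n) :
    ∀ g : (Fin n → ZMod 2) × (Fin n → ZMod 2) → (Fin n → ZMod 2) × (Fin n → ZMod 2),
    g = (czConj n ⟨1, by omega⟩ ⟨2, by omega⟩) ∘ (czConj n ⟨1, by omega⟩ ⟨n - 1, by omega⟩) ∘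
        (czConj n ⟨2, by omega⟩ ⟨n - 1, by omega⟩) →
    (g ((fun _ => 1), 0) - ((fun _ => 1), 0) ∈ stabPairs n) ∧
    (g (0, (fun _ => 1)) - (0, (fun _ => 1)) ∈ stabPairs n) ∧
    (∀ j : Fin (n - 2), g (zpair n j) - zpair n j ∈ stabPairs n) ∧
    (g (xpair n ⟨0, by omega⟩) - (xpair n ⟨0, by omega⟩ + zpair n ⟨1, by omega⟩) ∈ stabPairs n) ∧
    (g (xpair n ⟨1, by omega⟩) - (xpair n ⟨1, by omega⟩ + zpair n ⟨0, by omega⟩) ∈ stabPairs n) ∧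
    (∀ j : Fin (n - 2), 2 ≤ (j : ℕ) → g (xpair n j) - xpair n j ∈ stabPairs n) := by
  intro g hg
  subst hg
  refine ⟨?_, ?_, ?_, ?_, ?_, ?_⟩
  · apply mem_of_eq_zero
    refine Prod.ext ?_ ?_ <;>
      simp only [czConj, Function.comp_apply, Prod.fst_sub, Prod.snd_sub] <;>
      funext i <;>
      simp only [xpair, zpair, Pi.sub_apply, Pi.add_apply, Pi.zero_apply, Fin.ext_iff,
        Prod.fst_add, Prod.snd_add, Prod.mk_sub_mk, Prod.fst_zero, Prod.snd_zero] <;>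
      (try split_ifs) <;>
      first | (exfalso; first | omega | tauto) | reduce_mod_char
  · apply mem_of_eq_zero
    refine Prod.ext ?_ ?_ <;>
      simp only [czConj, Function.comp_apply, Prod.fst_sub, Prod.snd_sub] <;>
      funext i <;>
      simp only [xpair, zpair, Pi.sub_apply, Pi.add_apply, Pi.zero_apply, Fin.ext_iff,
        Prod.fst_add, Prod.snd_add, Prod.mk_sub_mk, Prod.fst_zero, Prod.snd_zero] <;>
      (try split_ifs) <;>
      first | (exfalso; first | omega | tauto) | reduce_mod_char
  · intro j
    have hj1 : (j : ℕ) + 1 < n := by omega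
    apply mem_of_eq_zero
    refine Prod.ext ?_ ?_ <;>
      simp only [czConj, Function.comp_apply, Prod.fst_sub, Prod.snd_sub] <;>
      funext i <;>
      simp only [xpair, zpair, Pi.sub_apply, Pi.add_apply, Pi.zero_apply, Fin.ext_iff,
        Prod.fst_add, Prod.snd_add, Prod.mk_sub_mk, Prod.fst_zero, Prod.snd_zero] <;>
      (try split_ifs) <;>
      first | (exfalso; first | omega | tauto) | reduce_mod_char
  · apply mem_of_eq_zero
    refine Prod.ext ?_ ?_ <;>
      simp only [czConj, Function.comp_apply, Prod.fst_sub, Prod.snd_sub] <;>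
      funext i <;>
      simp only [xpair, zpair, Pi.sub_apply, Pi.add_apply, Pi.zero_apply, Fin.ext_iff,
        Prod.fst_add, Prod.snd_add, Prod.mk_sub_mk, Prod.fst_zero, Prod.snd_zero] <;>
      (try split_ifs) <;>
      first | (exfalso; first | omega | tauto) | reduce_mod_char
  · apply mem_of_eq_zero
    refine Prod.ext ?_ ?_ <;>
      simp only [czConj, Function.comp_apply, Prod.fst_sub, Prod.snd_sub] <;>
      funext i <;>
      simp only [xpair, zpair, Pi.sub_apply, Pi.add_apply, Pi.zero_apply, Fin.ext_iff,
        Prod.fst_add, Prod.snd_add, Prod.mk_sub_mk, Prod.fst_zero, Prod.snd_zero] <;>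
      (try split_ifs) <;>
      first | (exfalso; first | omega | tauto) | reduce_mod_char
  · intro j hj
    have hj1 : (j : ℕ) + 1 < n := by omega
    apply mem_of_eq_zero
    refine Prod.ext ?_ ?_ <;>
      simp only [czConj, Function.comp_apply, Prod.fst_sub, Prod.snd_sub] <;>
      funext i <;>
      simp only [xpair, zpair, Pi.sub_apply, Pi.add_apply, Pi.zero_apply, Fin.ext_iff,
        Prod.fst_add, Prod.snd_add, Prod.mk_sub_mk, Prod.fst_zero, Prod.snd_zero] <;>
      (try split_ifs) <;>
      first | (exfalso; first | omega | tauto) | reduce_mod_char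
end

section
/- In the [[15,7,3]] Hamming code, the 70 Pauli errors consisting of: the identity; all 45 weight-one Paulis X_i, Y_i, Z_i (i = 1,…,15); the twelve errors on qubits (8,9,10,11) given by X₈Z₁₀Z₁₁, Y₈Z₁₀Z₁₁, X₉Z₁₀Z₁₁, Y₉Z₁₀Z₁₁, Z₈Z₉X₁₀, Z₈Z₉Y₁₀, Z₈Z₉X₁₁, Z₈Z₉Y₁₁, Z₉X₁₀, Z₉Y₁₀, Z₉X₁₁, Z₉Y₁₁; and the analogous twelve errors on qubits (12,13,14,15) — all have pairwise distinct syndromes (combined X- and Z-stabilizer syndromes) or differ by a stabilizer. -/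
/-- The row space of H: the X-strings (= Z-strings) of the stabilizer group. -/
def rowSpace : Submodule (ZMod 2) (Fin 15 → ZMod 2) :=
  Submodule.span (ZMod 2) (Set.range fun r => Hmat r)

/-- The indicator vector of a (1-indexed) list of positions. -/
def eV (s : List ℕ) : Fin 15 → ZMod 2 :=
  fun i => if ((i : ℕ) + 1) ∈ s then 1 else 0

/-- The combined syndrome (Hb, Ha) of a Pauli error with X-part a, Z-part b. -/
def synd (e : (Fin 15 → ZMod 2) × (Fin 15 → ZMod 2)) :
    (Fin 4 → ZMod 2) × (Fin 4 → ZMod 2) :=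
  (Hmat.mulVec e.2, Hmat.mulVec e.1)

/-- The twelve correlated errors on the four (1-indexed) qubits o+1,…,o+4:
for o = 7 these are X₈Z₁₀Z₁₁, Y₈Z₁₀Z₁₁, X₉Z₁₀Z₁₁, Y₉Z₁₀Z₁₁, Z₈Z₉X₁₀, Z₈Z₉Y₁₀,
Z₈Z₉X₁₁, Z₈Z₉Y₁₁, Z₉X₁₀, Z₉Y₁₀, Z₉X₁₁, Z₉Y₁₁;  for o = 11 the analogous
errors on qubits 12,…,15. -/
def block (o : ℕ) : List ((Fin 15 → ZMod 2) × (Fin 15 → ZMod 2)) :=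
  [ (eV [o+1], eV [o+3, o+4]), (eV [o+1], eV [o+1, o+3, o+4]),
    (eV [o+2], eV [o+3, o+4]), (eV [o+2], eV [o+2, o+3, o+4]),
    (eV [o+3], eV [o+1, o+2]), (eV [o+3], eV [o+1, o+2, o+3]),
    (eV [o+4], eV [o+1, o+2]), (eV [o+4], eV [o+1, o+2, o+4]),
    (eV [o+3], eV [o+2]),      (eV [o+3], eV [o+2, o+3]),
    (eV [o+4], eV [o+2]),      (eV [o+4], eV [o+2, o+4]) ]

/-- The 45 weight-one Pauli errors X_i, Z_i, Y_i for i = 1,…,15. -/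
def singles : List ((Fin 15 → ZMod 2) × (Fin 15 → ZMod 2)) :=
  (List.finRange 15).flatMap fun i =>
    [ (eV [(i : ℕ) + 1], eV []), (eV [], eV [(i : ℕ) + 1]),
      (eV [(i : ℕ) + 1], eV [(i : ℕ) + 1]) ]

/-- The list of 70 errors: identity, the 45 weight-one Paulis, and the two
blocks of twelve correlated errors on qubits (8,9,10,11) and (12,13,14,15). -/
def errors : List ((Fin 15 → ZMod 2) × (Fin 15 → ZMod 2)) :=
  (eV [], eV []) :: (singles ++ block 7 ++ block 11)

/-- Encode a combined syndrome as a natural number in [0, 256). -/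
def sN8 (u : (Fin 4 → ZMod 2) × (Fin 4 → ZMod 2)) : ℕ :=
  (∑ r : Fin 4, (u.1 r).val * 2 ^ (r : ℕ)) +
    16 * ∑ r : Fin 4, (u.2 r).val * 2 ^ (r : ℕ)

set_option maxRecDepth 100000 in
lemma map_sN8_synd_errors :
    errors.map (fun e => sN8 (synd e)) =
      [0, 128, 8, 136, 64, 4, 68, 192, 12, 204, 32, 2, 34, 160, 10, 170, 96, 6,
       102, 224, 14, 238, 16, 1, 17, 144, 9, 153, 80, 5, 85, 208, 13, 221, 48,
       3, 51, 176, 11, 187, 112, 7, 119, 240, 15, 255, 24, 25, 152, 145, 88,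
       93, 216, 213, 89, 92, 217, 212, 56, 59, 184, 179, 120, 127, 248, 247,
       123, 124, 251, 244] := by decide

lemma synd_injOn : ∀ e₁ ∈ errors, ∀ e₂ ∈ errors, synd e₁ = synd e₂ → e₁ = e₂ := by
  have hnd : (errors.map (fun e => sN8 (synd e))).Nodup := by
    rw [map_sN8_synd_errors]; decide
  intro e₁ h₁ e₂ h₂ h
  exact List.inj_on_of_nodup_map hnd h₁ h₂ (congrArg sN8 h)

/-- Any two of the 70 listed errors with equal combined syndromes differ by a
stabilizer; i.e., all 70 errors have pairwise distinct syndromes or differ by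
a stabilizer. -/
theorem stmt_19 :
    ∀ e₁ ∈ errors, ∀ e₂ ∈ errors, synd e₁ = synd e₂ →
      (e₁.1 + e₂.1 ∈ rowSpace ∧ e₁.2 + e₂.2 ∈ rowSpace) := by
  intro e₁ h₁ e₂ h₂ h
  have heq := synd_injOn e₁ h₁ e₂ h₂ h
  subst heq
  have hz : ∀ v : Fin 15 → ZMod 2, v + v = 0 := by
    intro v; funext i
    have : ∀ a : ZMod 2, a + a = 0 := by decide
    exact this (v i)
  rw [hz, hz]
  exact ⟨zero_mem _, zero_mem _⟩
end
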